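/- (Factorization of bounded measures by Carleson measures — nontangential bound.) Let μ be a nonnegative bounded Borel measure on the closed upper half space with 𝒜̄(μ)(x) ∈ (0,∞) for a.e. x, and fix 0 < p₀ < 1. Define E(μ)(y,t) = |B(y,t)|⁻¹∫_{B(y,t)} 𝒜̄(μ)⁻¹ dx. Then for every x ∈ ℝⁿ, 𝒩(E(μ)⁻¹)(x) ≤ M(𝒜̄(μ)^{p₀})(x)^{1/p₀}, where 𝒩 is the nontangential maximal functional and M is the Hardy–Littlewood maximal operator. Consequently ‖E(μ)⁻¹‖_{T¹_∞} = ‖𝒩(E(μ)⁻¹)‖_{L¹} ≤ C(n,p₀)‖𝒜̄(μ)‖_{L¹}. -/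

import Mathlib

open MeasureTheory Metric Set

/-- The balayage 𝒜̄(μ)(x) = ∫∫_{Γ(x)} s^{-n} dμ(z,s). -/
noncomputable def balayage (n : ℕ) (μ : Measure (EuclideanSpace ℝ (Fin n) × ℝ))
    (x : EuclideanSpace ℝ (Fin n)) : ENNReal :=
  ∫⁻ p in {p : EuclideanSpace ℝ (Fin n) × ℝ | dist p.1 x < p.2},
    (ENNReal.ofReal (p.2 ^ n))⁻¹ ∂μ

/-- The extension E(μ)(y,t) = |B(y,t)|⁻¹ ∫_{B(y,t)} 𝒜̄(μ)⁻¹ dx. -/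
noncomputable def balExt (n : ℕ) (μ : Measure (EuclideanSpace ℝ (Fin n) × ℝ))
    (y : EuclideanSpace ℝ (Fin n)) (t : ℝ) : ENNReal :=
  (volume (ball y t))⁻¹ * ∫⁻ x in ball y t, (balayage n μ x)⁻¹

/-- The (uncentered) Hardy–Littlewood maximal function of g at x. -/
noncomputable def hlMax (n : ℕ) (g : EuclideanSpace ℝ (Fin n) → ENNReal)
    (x : EuclideanSpace ℝ (Fin n)) : ENNReal :=
  ⨆ (c : EuclideanSpace ℝ (Fin n)) (r : ℝ) (_ : 0 < r) (_ : x ∈ ball c r),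
    (volume (ball c r))⁻¹ * ∫⁻ z in ball c r, g z

/-! For `(y, t)` in the cone `Γ(x)` the ball `B(y, t)` contains `x`. Hölder's inequality with
exponents `1 + p₀` and `(1 + p₀) / p₀` bounds the harmonic mean of `𝒜̄(μ)` on a ball by its
`L^{p₀}` mean, hence by `M(𝒜̄(μ)^{p₀})(x)^{1/p₀}`. Integrating, the `L¹` bound is the
boundedness of `M` on `L^{1/p₀}`, `1/p₀ > 1`: weak type `(1, 1)` from the Vitali covering lemma,
applied to the truncations `g · 1_{g > 2^k}` at dyadic levels and summed as a geometric series. -/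

open scoped ENNReal

namespace ENNReal

theorem rpow_le_four_rpow_mul_tsum_dyadic {s : ℝ} (hs : 0 < s) (a : ℝ≥0∞) :
    a ^ s ≤ 4 ^ s * ∑' k : ℤ, if 2 * 2 ^ k < a then ((2 : ℝ≥0∞) ^ k) ^ s else 0 := by
  rcases eq_or_ne a 0 with rfl | ha0
  · simp [zero_rpow_of_pos hs]
  rcases eq_or_ne a ⊤ with rfl | hat
  · have hsum : ∑' k : ℤ, (if 2 * 2 ^ k < ∞ then ((2 : ℝ≥0∞) ^ k) ^ s else 0) = ∞ := by
      refine top_unique ?_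
      calc ∞ = ∑' _ : ℕ, (1 : ℝ≥0∞) := (tsum_const_eq_top_of_ne_zero one_ne_zero).symm
        _ ≤ ∑' j : ℕ, (if 2 * 2 ^ (j : ℤ) < ∞ then ((2 : ℝ≥0∞) ^ (j : ℤ)) ^ s else 0) := by
            refine ENNReal.tsum_le_tsum fun j => ?_
            rw [if_pos (by simp [mul_lt_top])]
            exact one_le_rpow (by simpa using one_le_pow₀ one_le_two) hs
        _ ≤ _ := tsum_comp_le_tsum_of_injective Nat.cast_injective
            fun k : ℤ => if 2 * 2 ^ k < ∞ then ((2 : ℝ≥0∞) ^ k) ^ s else 0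
    rw [hsum, mul_top (by positivity)]
    exact le_top
  obtain ⟨k, hk, hak⟩ := exists_mem_Ioc_zpow ha0 hat one_lt_two ofNat_ne_top
  have htwo : (2 : ℝ≥0∞) * 2 ^ (k - 1) = 2 ^ k := by
    simpa using (ENNReal.zpow_add two_ne_zero ofNat_ne_top 1 (k - 1)).symm
  have hfour : (2 : ℝ≥0∞) ^ (k + 1) = 4 * 2 ^ (k - 1) := by
    rw [show (4 : ℝ≥0∞) = 2 * 2 by norm_num, mul_assoc, htwo,
      ENNReal.zpow_add two_ne_zero ofNat_ne_top, zpow_one, mul_comm]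
  calc a ^ s ≤ ((2 : ℝ≥0∞) ^ (k + 1)) ^ s := rpow_le_rpow hak hs.le
    _ = 4 ^ s * ((2 : ℝ≥0∞) ^ (k - 1)) ^ s := by rw [hfour, mul_rpow_of_nonneg _ _ hs.le]
    _ ≤ 4 ^ s * ∑' k : ℤ, if 2 * 2 ^ k < a then ((2 : ℝ≥0∞) ^ k) ^ s else 0 := by
        gcongr
        refine le_of_eq_of_le ?_ (ENNReal.le_tsum (k - 1))
        rw [if_pos (htwo ▸ hk)]

theorem tsum_dyadic_rpow_le {s : ℝ} (hs : 0 < s) (a : ℝ≥0∞) :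
    ∑' k : ℤ, (if 2 ^ k < a then ((2 : ℝ≥0∞) ^ k) ^ s else 0) ≤ (1 - 2⁻¹ ^ s)⁻¹ * a ^ s := by
  rcases eq_or_ne a 0 with rfl | ha0
  · simp
  rcases eq_or_ne a ⊤ with rfl | hat
  · rw [top_rpow_of_pos hs, mul_top (ENNReal.inv_ne_zero.2 (sub_ne_top one_ne_top))]
    exact le_top
  obtain ⟨k₀, hk₀, hak₀⟩ := exists_mem_Ioc_zpow ha0 hat one_lt_two ofNat_ne_top
  have hle : ∀ k : ℤ, 2 ^ k < a → k ≤ k₀ := fun k hk => by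
    by_contra! hk₀k
    exact (monotone_zpow one_le_two (Int.add_one_le_iff.2 hk₀k)).not_gt (hk.trans_le hak₀)
  have hterm : ∀ j : ℕ, ((2 : ℝ≥0∞) ^ (k₀ - j)) ^ s = (2 ^ k₀) ^ s * (2⁻¹ ^ s) ^ j := by
    intro j
    rw [ENNReal.zpow_sub two_ne_zero ofNat_ne_top, zpow_natCast, ENNReal.inv_pow,
      mul_rpow_of_nonneg _ _ hs.le, ← rpow_natCast, ← rpow_mul, mul_comm (j : ℝ) s, rpow_mul,
      rpow_natCast]
  calc ∑' k : ℤ, (if 2 ^ k < a then ((2 : ℝ≥0∞) ^ k) ^ s else 0)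
      = ∑' j : ℕ, (if 2 ^ (k₀ - j) < a then ((2 : ℝ≥0∞) ^ (k₀ - j)) ^ s else 0) := by
        refine (Function.Injective.tsum_eq (fun i j h => by simpa using h) fun k hk => ?_).symm
        have := hle k (by by_contra h; exact hk (if_neg h))
        exact ⟨(k₀ - k).toNat, by simp [this]⟩
    _ ≤ ∑' j : ℕ, (2 ^ k₀) ^ s * (2⁻¹ ^ s) ^ j := by
        refine ENNReal.tsum_le_tsum fun j => ?_
        split_ifs
        · exact (hterm j).le
        · exact zero_le
    _ = (2 ^ k₀) ^ s * (1 - 2⁻¹ ^ s)⁻¹ := by rw [ENNReal.tsum_mul_left, tsum_geometric]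
    _ ≤ (1 - 2⁻¹ ^ s)⁻¹ * a ^ s := by
        rw [mul_comm]
        gcongr

end ENNReal

section Covering

variable {E : Type*} [NormedAddCommGroup E] [NormedSpace ℝ E] [FiniteDimensional ℝ E]
  [MeasurableSpace E] [BorelSpace E] (μ : Measure E) [μ.IsAddHaarMeasure] (ν : Measure E)

lemma addHaar_ball_five_mul (x : E) (r : ℝ) :
    μ (ball x (5 * r)) = 5 ^ Module.finrank ℝ E * μ (ball x r) := by
  rw [Measure.addHaar_ball_mul_of_pos μ x (by norm_num : (0 : ℝ) < 5),
    ← Measure.addHaar_ball_center μ x, ENNReal.ofReal_pow (by norm_num), ENNReal.ofReal_ofNat]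

lemma addHaar_biUnion_ball_le_of_radius_le {t : Set (E × ℝ)} {R : ℝ} (hR : ∀ i ∈ t, i.2 ≤ R)
    (ht : ∀ i ∈ t, 0 < i.2 ∧ μ (ball i.1 i.2) ≤ ν (ball i.1 i.2)) :
    μ (⋃ i ∈ t, ball i.1 i.2) ≤ 5 ^ Module.finrank ℝ E * ν univ := by
  obtain ⟨u, hut, hdisj, hcover⟩ :=
    Vitali.exists_disjoint_subfamily_covering_enlargement_ball t Prod.fst Prod.snd R hR 5
      (by norm_num)
  have hu : u.Countable := hdisj.countable_of_isOpen (fun _ _ => isOpen_ball)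
    fun i hi => nonempty_ball.2 (ht i (hut hi)).1
  calc μ (⋃ i ∈ t, ball i.1 i.2) ≤ μ (⋃ i ∈ u, ball i.1 (5 * i.2)) := by
        refine measure_mono (iUnion₂_subset fun i hi => ?_)
        obtain ⟨j, hj, hij⟩ := hcover i hi
        exact hij.trans (subset_biUnion_of_mem (u := fun i => ball i.1 (5 * i.2)) hj)
    _ ≤ ∑' i : u, μ (ball i.1.1 (5 * i.1.2)) := measure_biUnion_le μ hu _
    _ ≤ ∑' i : u, 5 ^ Module.finrank ℝ E * ν (ball i.1.1 i.1.2) := by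
        refine ENNReal.tsum_le_tsum fun i => ?_
        rw [addHaar_ball_five_mul]
        exact mul_le_mul_right (ht i (hut i.2)).2 _
    _ = 5 ^ Module.finrank ℝ E * ν (⋃ i ∈ u, ball i.1 i.2) := by
        rw [ENNReal.tsum_mul_left, measure_biUnion hu hdisj fun _ _ => measurableSet_ball]
    _ ≤ 5 ^ Module.finrank ℝ E * ν univ := by gcongr; exact subset_univ _

-- Radii need not be bounded: the union is exhausted by the subfamilies of radius at most `N`.
lemma addHaar_biUnion_ball_le {t : Set (E × ℝ)}
    (ht : ∀ i ∈ t, 0 < i.2 ∧ μ (ball i.1 i.2) ≤ ν (ball i.1 i.2)) :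
    μ (⋃ i ∈ t, ball i.1 i.2) ≤ 5 ^ Module.finrank ℝ E * ν univ := by
  have hexhaust : ⋃ i ∈ t, ball i.1 i.2 = ⋃ N : ℕ, ⋃ i ∈ {i ∈ t | i.2 ≤ N}, ball i.1 i.2 := by
    refine Subset.antisymm (iUnion₂_subset fun i hi => ?_)
      (iUnion_subset fun N => biUnion_subset_biUnion_left fun i hi => hi.1)
    obtain ⟨N, hN⟩ := exists_nat_ge i.2
    exact subset_iUnion_of_subset N (subset_biUnion_of_mem (u := fun i : E × ℝ => ball i.1 i.2)
      (show i ∈ {i ∈ t | i.2 ≤ N} from ⟨hi, hN⟩))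
  have hmono : Monotone fun N : ℕ => ⋃ i ∈ {i ∈ t | i.2 ≤ N}, ball i.1 i.2 :=
    fun N M hNM => biUnion_subset_biUnion_left fun i hi =>
      ⟨hi.1, hi.2.trans (by exact_mod_cast hNM)⟩
  rw [hexhaust, hmono.measure_iUnion]
  exact iSup_le fun N =>
    addHaar_biUnion_ball_le_of_radius_le μ ν (fun i hi => hi.2) fun i hi => ht i hi.1

end Covering

section MaximalFunction

variable {n : ℕ} {g : EuclideanSpace ℝ (Fin n) → ℝ≥0∞}

lemma le_hlMax {x c : EuclideanSpace ℝ (Fin n)} {r : ℝ} (hr : 0 < r) (hx : x ∈ ball c r) :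
    (volume (ball c r))⁻¹ * ∫⁻ z in ball c r, g z ≤ hlMax n g x :=
  le_iSup₂_of_le c r (le_iSup₂_of_le (α := ℝ≥0∞) hr hx le_rfl)

lemma hlMax_le {x : EuclideanSpace ℝ (Fin n)} {A : ℝ≥0∞}
    (h : ∀ c r, 0 < r → x ∈ ball c r → (volume (ball c r))⁻¹ * ∫⁻ z in ball c r, g z ≤ A) :
    hlMax n g x ≤ A :=
  iSup₂_le fun c r => iSup₂_le fun hr hx => h c r hr hx

lemma lowerSemicontinuous_hlMax : LowerSemicontinuous (hlMax n g) := by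
  refine lowerSemicontinuous_iff_isOpen_preimage.2 fun a => ?_
  have : hlMax n g ⁻¹' Ioi a = ⋃ (c) (r) (_ : 0 < r ∧
      a < (volume (ball c r))⁻¹ * ∫⁻ z in ball c r, g z), ball c r := by
    ext x
    simp only [mem_preimage, mem_Ioi, hlMax, lt_iSup_iff, mem_iUnion]
    grind
  rw [this]
  exact isOpen_iUnion fun c => isOpen_iUnion fun r => isOpen_iUnion fun _ => isOpen_ball

lemma exists_ball_of_lt_hlMax {x : EuclideanSpace ℝ (Fin n)} {ε : ℝ≥0∞} (hε : ε ≠ 0)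
    (h : ε < hlMax n g x) : ∃ c r, 0 < r ∧ x ∈ ball c r ∧
      volume (ball c r) ≤ ε⁻¹ * ∫⁻ z in ball c r, g z := by
  simp only [hlMax, lt_iSup_iff] at h
  obtain ⟨c, r, hr, hx, hlt⟩ := h
  refine ⟨c, r, hr, hx, ?_⟩
  have hεtop : ε ≠ ⊤ := hlt.ne_top
  rw [mul_comm, ← div_eq_mul_inv, ENNReal.lt_div_iff_mul_lt
    (Or.inl (measure_ball_pos _ _ hr).ne') (Or.inl measure_ball_lt_top.ne)] at hlt
  rw [mul_comm, ← div_eq_mul_inv, ENNReal.le_div_iff_mul_le (Or.inl hε) (Or.inl hεtop), mul_comm]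
  exact hlt.le

theorem volume_lt_hlMax_le {ε : ℝ≥0∞} (hε : ε ≠ 0) :
    volume {x | ε < hlMax n g x} ≤ 5 ^ n * ε⁻¹ * ∫⁻ x, g x := by
  set ν := ε⁻¹ • volume.withDensity g
  have hν : ∀ s, MeasurableSet s → ν s = ε⁻¹ * ∫⁻ x in s, g x := fun s hs => by
    simp [ν, withDensity_apply _ hs]
  set t := {i : EuclideanSpace ℝ (Fin n) × ℝ | 0 < i.2 ∧ volume (ball i.1 i.2) ≤ ν (ball i.1 i.2)}
  calc volume {x | ε < hlMax n g x} ≤ volume (⋃ i ∈ t, ball i.1 i.2) := by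
        refine measure_mono fun x hx => ?_
        obtain ⟨c, r, hr, hxb, hle⟩ := exists_ball_of_lt_hlMax hε hx
        exact mem_biUnion (x := (c, r)) ⟨hr, (hν _ measurableSet_ball).symm ▸ hle⟩ hxb
    _ ≤ 5 ^ n * ν univ := by
        simpa only [finrank_euclideanSpace_fin] using
          addHaar_biUnion_ball_le volume ν (t := t) fun i hi => hi
    _ = 5 ^ n * ε⁻¹ * ∫⁻ x, g x := by
        rw [hν _ MeasurableSet.univ, Measure.restrict_univ, mul_assoc]

lemma hlMax_le_hlMax_indicator_add (δ : ℝ≥0∞) (x : EuclideanSpace ℝ (Fin n)) :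
    hlMax n g x ≤ hlMax n ({y | δ < g y}.indicator g) x + δ := by
  refine hlMax_le fun c r hr hx => ?_
  have hV0 : volume (ball c r) ≠ 0 := (measure_ball_pos _ _ hr).ne'
  have hVtop : volume (ball c r) ≠ ⊤ := measure_ball_lt_top.ne
  have hsplit : ∀ y, g y ≤ {y | δ < g y}.indicator g y + δ := fun y => by
    by_cases h : δ < g y
    · simp [h]
    · simpa [h] using not_lt.1 h
  calc (volume (ball c r))⁻¹ * ∫⁻ z in ball c r, g z
      ≤ (volume (ball c r))⁻¹ * ∫⁻ z in ball c r, ({y | δ < g y}.indicator g z + δ) := by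
        gcongr with z; exact hsplit z
    _ = (volume (ball c r))⁻¹ * (∫⁻ z in ball c r, {y | δ < g y}.indicator g z) + δ := by
        rw [lintegral_add_right _ measurable_const, setLIntegral_const, mul_add, mul_comm δ,
          ← mul_assoc, ENNReal.inv_mul_cancel hV0 hVtop, one_mul]
    _ ≤ hlMax n ({y | δ < g y}.indicator g) x + δ := add_le_add_left (le_hlMax hr hx) δ

theorem volume_two_mul_lt_hlMax_le {δ : ℝ≥0∞} (hδ0 : δ ≠ 0) (hδ : δ ≠ ⊤) :
    volume {x | 2 * δ < hlMax n g x} ≤ 5 ^ n * δ⁻¹ * ∫⁻ x, {y | δ < g y}.indicator g x := by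
  refine le_trans (measure_mono fun x hx => ?_) (volume_lt_hlMax_le hδ0)
  have h := (show δ + δ < _ from two_mul δ ▸ hx).trans_le (hlMax_le_hlMax_indicator_add δ x)
  exact (ENNReal.add_lt_add_iff_right hδ).1 h

lemma rpow_mul_volume_two_mul_lt_hlMax_le {t : ℝ≥0∞} (ht0 : t ≠ 0) (ht : t ≠ ⊤) (q : ℝ) :
    t ^ q * volume {x | 2 * t < hlMax n g x} ≤
      5 ^ n * ∫⁻ x, g x * (if t < g x then t ^ (q - 1) else 0) := by
  have hpow : t ^ q * t⁻¹ = t ^ (q - 1) := by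
    rw [ENNReal.rpow_sub _ _ ht0 ht, ENNReal.rpow_one, div_eq_mul_inv]
  calc t ^ q * volume {x | 2 * t < hlMax n g x}
      ≤ t ^ q * (5 ^ n * t⁻¹ * ∫⁻ x, {y | t < g y}.indicator g x) := by
        gcongr; exact volume_two_mul_lt_hlMax_le ht0 ht
    _ = 5 ^ n * (t ^ (q - 1) * ∫⁻ x, {y | t < g y}.indicator g x) := by
        rw [← hpow]; ring
    _ = 5 ^ n * ∫⁻ x, g x * (if t < g x then t ^ (q - 1) else 0) := by
        rw [← lintegral_const_mul' _ _ (ENNReal.rpow_ne_top_of_ne_zero ht0 ht)]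
        congr 1
        refine lintegral_congr fun x => ?_
        by_cases h : t < g x <;> simp [h, mul_comm]

theorem lintegral_hlMax_rpow_le {q : ℝ} (hq : 1 < q) (hg : Measurable g) :
    ∫⁻ x, hlMax n g x ^ q ≤ 4 ^ q * 5 ^ n * (1 - 2⁻¹ ^ (q - 1))⁻¹ * ∫⁻ x, g x ^ q := by
  have hM : Measurable (hlMax n g) := lowerSemicontinuous_hlMax.measurable
  have hmeas : ∀ k : ℤ, Measurable fun x =>
      g x * (if 2 ^ k < g x then ((2 : ℝ≥0∞) ^ k) ^ (q - 1) else 0) := fun k =>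
    hg.mul (Measurable.ite (measurableSet_lt measurable_const hg) measurable_const
      measurable_const)
  have hgeom : (1 - (2 : ℝ≥0∞)⁻¹ ^ (q - 1))⁻¹ ≠ ⊤ :=
    ENNReal.inv_ne_top.2 (tsub_pos_of_lt (ENNReal.rpow_lt_one (by norm_num) (by linarith))).ne'
  calc ∫⁻ x, hlMax n g x ^ q
      ≤ ∫⁻ x, 4 ^ q * ∑' k : ℤ,
          (if 2 * 2 ^ k < hlMax n g x then ((2 : ℝ≥0∞) ^ k) ^ q else 0) :=
        lintegral_mono fun x => ENNReal.rpow_le_four_rpow_mul_tsum_dyadic (by linarith) _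
    _ = 4 ^ q * ∑' k : ℤ, ((2 : ℝ≥0∞) ^ k) ^ q * volume {x | 2 * 2 ^ k < hlMax n g x} := by
        rw [lintegral_const_mul' _ _ (ENNReal.rpow_ne_top_of_nonneg (by linarith) (by norm_num)),
          lintegral_tsum fun k => (Measurable.ite (measurableSet_lt measurable_const hM)
            measurable_const measurable_const).aemeasurable]
        congr 1
        refine tsum_congr fun k => ?_
        rw [← lintegral_indicator_const (measurableSet_lt measurable_const hM)]
        simp only [indicator, mem_ofPred_eq]
    _ ≤ 4 ^ q * ∑' k : ℤ,
          5 ^ n * ∫⁻ x, g x * (if 2 ^ k < g x then ((2 : ℝ≥0∞) ^ k) ^ (q - 1) else 0) := by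
        refine mul_le_mul_right (ENNReal.tsum_le_tsum fun k => ?_) _
        exact rpow_mul_volume_two_mul_lt_hlMax_le
          (ENNReal.zpow_pos two_ne_zero ENNReal.ofNat_ne_top k).ne'
          (ENNReal.zpow_ne_top two_ne_zero ENNReal.ofNat_ne_top k) q
    _ = 4 ^ q * 5 ^ n * ∫⁻ x, g x *
          ∑' k : ℤ, (if 2 ^ k < g x then ((2 : ℝ≥0∞) ^ k) ^ (q - 1) else 0) := by
        simp_rw [ENNReal.tsum_mul_left, ← lintegral_tsum fun k => (hmeas k).aemeasurable,
          ENNReal.tsum_mul_left, mul_assoc]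
    _ ≤ 4 ^ q * 5 ^ n * ∫⁻ x, g x * ((1 - 2⁻¹ ^ (q - 1))⁻¹ * g x ^ (q - 1)) := by
        gcongr with x; exact ENNReal.tsum_dyadic_rpow_le (by linarith) _
    _ = 4 ^ q * 5 ^ n * (1 - 2⁻¹ ^ (q - 1))⁻¹ * ∫⁻ x, g x ^ q := by
        rw [mul_assoc _ (1 - 2⁻¹ ^ (q - 1))⁻¹, ← lintegral_const_mul' _ _ hgeom]
        congr 1
        refine lintegral_congr fun x => ?_
        rw [mul_left_comm]
        congr 1
        conv_rhs => rw [← add_sub_cancel 1 q, ENNReal.rpow_add_of_nonneg _ _ zero_le_one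
          (by linarith), ENNReal.rpow_one]

end MaximalFunction

section Holder

variable {α : Type*} [MeasurableSpace α] {μ : Measure α} {f : α → ℝ≥0∞}

-- Hölder with exponents `1 + p` and `(1 + p) / p`, applied to `1 = f ^ b * f⁻¹ ^ b`.
lemma one_le_lintegral_rpow_mul_lintegral_inv [IsProbabilityMeasure μ] (hf : AEMeasurable f μ)
    (hf0 : ∀ᵐ x ∂μ, f x ≠ 0) (hftop : ∀ᵐ x ∂μ, f x ≠ ⊤) {p : ℝ} (hp : 0 < p) :
    1 ≤ (∫⁻ x, f x ^ p ∂μ) ^ (1 / p) * ∫⁻ x, (f x)⁻¹ ∂μ := by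
  set a := 1 / (1 + p)
  set b := p / (1 + p)
  have hab : a + b = 1 := by simp only [a, b]; field_simp
  have hb : 0 < b := by positivity
  have hone : 1 ≤ (∫⁻ x, f x ^ p ∂μ) ^ a * (∫⁻ x, (f x)⁻¹ ∂μ) ^ b :=
    calc 1 = ∫⁻ _, 1 ∂μ := by simp
      _ = ∫⁻ x, (f x ^ p) ^ a * (f x)⁻¹ ^ b ∂μ := by
          refine lintegral_congr_ae ?_
          filter_upwards [hf0, hftop] with x hx0 hxtop
          rw [← ENNReal.rpow_mul, show p * a = b by simp only [a, b]; field_simp,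
            ← ENNReal.mul_rpow_of_nonneg _ _ hb.le, ENNReal.mul_inv_cancel hx0 hxtop,
            ENNReal.one_rpow]
      _ ≤ _ := ENNReal.lintegral_mul_norm_pow_le (hf.pow_const p) hf.inv (by positivity) hb.le hab
  calc 1 ≤ ((∫⁻ x, f x ^ p ∂μ) ^ a * (∫⁻ x, (f x)⁻¹ ∂μ) ^ b) ^ (1 / b) :=
        ENNReal.one_le_rpow hone (by positivity)
    _ = (∫⁻ x, f x ^ p ∂μ) ^ (1 / p) * ∫⁻ x, (f x)⁻¹ ∂μ := by
        rw [ENNReal.mul_rpow_of_nonneg _ _ (by positivity), ← ENNReal.rpow_mul, ← ENNReal.rpow_mul,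
          show a * (1 / b) = 1 / p by simp only [a, b]; field_simp,
          show b * (1 / b) = 1 by field_simp, ENNReal.rpow_one]

lemma inv_laverage_inv_le_laverage_rpow [IsFiniteMeasure μ] [NeZero μ] (hf : AEMeasurable f μ)
    (hf0 : ∀ᵐ x ∂μ, f x ≠ 0) (hftop : ∀ᵐ x ∂μ, f x ≠ ⊤) {p : ℝ} (hp : 0 < p) :
    (⨍⁻ x, (f x)⁻¹ ∂μ)⁻¹ ≤ (⨍⁻ x, f x ^ p ∂μ) ^ (1 / p) := by
  have key := one_le_lintegral_rpow_mul_lintegral_inv (μ := (μ univ)⁻¹ • μ)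
    (hf.smul_measure _) (Measure.ae_smul_measure hf0 _) (Measure.ae_smul_measure hftop _) hp
  rw [← laverage_eq', ← laverage_eq'] at key
  have hprod := (zero_lt_one.trans_le key).ne'
  rw [ENNReal.inv_le_iff_le_mul (fun _ => right_ne_zero_of_mul hprod)
    (fun _ => left_ne_zero_of_mul hprod), mul_comm]
  exact key

end Holder

lemma measurable_balayage (n : ℕ) (μ : Measure (EuclideanSpace ℝ (Fin n) × ℝ)) [SFinite μ] :
    Measurable (balayage n μ) := by
  have hcone : MeasurableSet {q : EuclideanSpace ℝ (Fin n) × (EuclideanSpace ℝ (Fin n) × ℝ) |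
      dist q.2.1 q.1 < q.2.2} :=
    (isOpen_lt (continuous_snd.fst.dist continuous_fst) continuous_snd.snd).measurableSet
  have hkernel : Measurable (Function.uncurry fun x (q : EuclideanSpace ℝ (Fin n) × ℝ) =>
      {q : EuclideanSpace ℝ (Fin n) × ℝ | dist q.1 x < q.2}.indicator
        (fun q => (ENNReal.ofReal (q.2 ^ n))⁻¹) q) :=
    (Measurable.inv (by fun_prop)).indicator hcone
  convert hkernel.lintegral_prod_right (ν := μ) using 2 with x
  exact (lintegral_indicator (measurableSet_lt (measurable_fst.dist measurable_const)
    measurable_snd) _).symm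

lemma inv_balExt_le_hlMax_rpow {n : ℕ} {μ : Measure (EuclideanSpace ℝ (Fin n) × ℝ)} [SFinite μ]
    (hμ : ∀ᵐ x, 0 < balayage n μ x ∧ balayage n μ x < ⊤) {p : ℝ} (hp : 0 < p)
    {x y : EuclideanSpace ℝ (Fin n)} {t : ℝ} (hxy : dist y x < t) :
    (balExt n μ y t)⁻¹ ≤ hlMax n (fun z => balayage n μ z ^ p) x ^ (1 / p) := by
  have ht : 0 < t := dist_nonneg.trans_lt hxy
  have hx : x ∈ ball y t := by rwa [mem_ball, dist_comm]
  have : IsFiniteMeasure (volume.restrict (ball y t)) :=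
    isFiniteMeasure_restrict.2 measure_ball_lt_top.ne
  have : NeZero (volume.restrict (ball y t)) :=
    ⟨by simpa using (measure_ball_pos volume y ht).ne'⟩
  have havg : ∀ h : EuclideanSpace ℝ (Fin n) → ℝ≥0∞,
      (volume (ball y t))⁻¹ * ∫⁻ z in ball y t, h z = ⨍⁻ z in ball y t, h z ∂volume :=
    fun h => by rw [setLAverage_eq, div_eq_mul_inv, mul_comm]
  calc (balExt n μ y t)⁻¹ = (⨍⁻ z in ball y t, (balayage n μ z)⁻¹ ∂volume)⁻¹ := by
        rw [balExt, havg]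
    _ ≤ (⨍⁻ z in ball y t, balayage n μ z ^ p ∂volume) ^ (1 / p) :=
        inv_laverage_inv_le_laverage_rpow (measurable_balayage n μ).aemeasurable
          (ae_restrict_of_ae (hμ.mono fun z hz => hz.1.ne'))
          (ae_restrict_of_ae (hμ.mono fun z hz => hz.2.ne)) hp
    _ ≤ hlMax n (fun z => balayage n μ z ^ p) x ^ (1 / p) := by
        rw [← havg]
        gcongr
        exact le_hlMax ht hx

/-- factorization of bounded measures by Carleson measures: pointwise
𝒩(E(μ)⁻¹)(x) ≤ M(𝒜̄(μ)^{p₀})(x)^{1/p₀}, and consequently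
‖𝒩(E(μ)⁻¹)‖_{L¹} ≤ C(n,p₀) ‖𝒜̄(μ)‖_{L¹}. -/
theorem measure_factorization_nt_bound (n : ℕ) (p₀ : ℝ) (h0 : 0 < p₀) (h1 : p₀ < 1) :
    ∃ C : ENNReal, 0 < C ∧ C ≠ ⊤ ∧
      ∀ (μ : Measure (EuclideanSpace ℝ (Fin n) × ℝ)), IsFiniteMeasure μ →
        (∀ᵐ x ∂(volume : Measure (EuclideanSpace ℝ (Fin n))),
          0 < balayage n μ x ∧ balayage n μ x < ⊤) →
        (∀ x : EuclideanSpace ℝ (Fin n),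
          (⨆ p ∈ {p : EuclideanSpace ℝ (Fin n) × ℝ | dist p.1 x < p.2},
              (balExt n μ p.1 p.2)⁻¹) ≤
            hlMax n (fun z => balayage n μ z ^ p₀) x ^ (1/p₀)) ∧
        (∫⁻ x, ⨆ p ∈ {p : EuclideanSpace ℝ (Fin n) × ℝ | dist p.1 x < p.2},
            (balExt n μ p.1 p.2)⁻¹) ≤
          C * ∫⁻ x, balayage n μ x := by
  have hq : 1 < 1 / p₀ := (one_lt_div h0).2 h1
  have hgeom : (1 : ℝ≥0∞) - 2⁻¹ ^ (1 / p₀ - 1) ≠ 0 :=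
    (tsub_pos_of_lt (ENNReal.rpow_lt_one (by norm_num) (by linarith))).ne'
  refine ⟨4 ^ (1 / p₀) * 5 ^ n * (1 - 2⁻¹ ^ (1 / p₀ - 1))⁻¹, ?_, ?_, fun μ _ hμ => ?_⟩
  · exact ENNReal.mul_pos (by positivity)
      (ENNReal.inv_ne_zero.2 (ENNReal.sub_ne_top ENNReal.one_ne_top))
  · exact ENNReal.mul_ne_top (ENNReal.mul_ne_top
      (ENNReal.rpow_ne_top_of_nonneg (by positivity) (by norm_num)) (by simp))
      (ENNReal.inv_ne_top.2 hgeom)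
  have hpoint : ∀ x, (⨆ p ∈ {p : EuclideanSpace ℝ (Fin n) × ℝ | dist p.1 x < p.2},
      (balExt n μ p.1 p.2)⁻¹) ≤ hlMax n (fun z => balayage n μ z ^ p₀) x ^ (1 / p₀) :=
    fun x => iSup₂_le fun p hp => inv_balExt_le_hlMax_rpow hμ h0 hp
  refine ⟨hpoint, (lintegral_mono hpoint).trans ?_⟩
  calc ∫⁻ x, hlMax n (fun z => balayage n μ z ^ p₀) x ^ (1 / p₀)
      ≤ _ * ∫⁻ x, (balayage n μ x ^ p₀) ^ (1 / p₀) :=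
        lintegral_hlMax_rpow_le hq ((measurable_balayage n μ).pow_const p₀)
    _ = _ := by simp_rw [← ENNReal.rpow_mul, mul_one_div_cancel h0.ne', ENNReal.rpow_one]
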